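/- arXiv:2403.10476 — 2 statements merged into one kernel-verified Lean document; each statement's English description precedes it below -/
import Mathlib

section
/- Let d, dh, h, N be positive integers with 2 ≤ h and h * dh ≤ d. For each i = 1,…,h let Qᵢ, Kᵢ, Vᵢ ∈ ℝ^{d×dh}, and define the i-th attention head headᵢ(X) = rowSoftmax(X Qᵢ Kᵢᵀ Xᵀ) · (X Vᵢ) for X ∈ ℝ^{N×d}, where for a matrix S ∈ ℝ^{N×N}, rowSoftmax(S)_{jk} = exp(S_{jk}) / Σ_{l} exp(S_{jl}). Assume: (1) Qᵢ Kᵢᵀ is a symmetric matrix for every i; (2) the row space of Vᵢᵀ is contained in the row space of Qᵢ Kᵢᵀ for every i; (3) there exist indices m ≠ m' and a row index k such that the k-th row of Q_m K_mᵀ is nonzero and lies in the row space of Q_{m'} K_{m'}ᵀ. Then there exists a matrix W ∈ ℝ^{N×d} with W ≠ 0 such that headᵢ(X + W) = headᵢ(X) for every i = 1,…,h and every X ∈ ℝ^{N×d}. -/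
open Matrix

/-- Row-wise softmax of a square matrix. -/
noncomputable def rowSoftmax {N : ℕ} (S : Matrix (Fin N) (Fin N) ℝ) :
    Matrix (Fin N) (Fin N) ℝ :=
  Matrix.of fun j k => Real.exp (S j k) / ∑ l, Real.exp (S j l)

/-- A self-attention head with query, key, value matrices `Q K V : ℝ^{d×dh}`,
applied to `X : ℝ^{N×d}`. -/
noncomputable def attnHead {d dh N : ℕ} (Q K V : Matrix (Fin d) (Fin dh) ℝ)
    (X : Matrix (Fin N) (Fin d) ℝ) : Matrix (Fin N) (Fin dh) ℝ :=
  rowSoftmax (X * Q * Kᵀ * Xᵀ) * (X * V)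

/-- The row space of a matrix: the span of its rows, i.e. the range of `x ↦ Aᵀ x`. -/
def rowSpace {m n : ℕ} (A : Matrix (Fin m) (Fin n) ℝ) : Submodule ℝ (Fin n → ℝ) :=
  LinearMap.range (Matrix.mulVecLin Aᵀ)

/- The row spaces of the `Qᵢ Kᵢᵀ` have dimension at most `dh`; since two of them meet
nontrivially, their sum has dimension below `h dh ≤ d`, so some `w ≠ 0` is orthogonal to all of
them. Adding `w` to every row of `X` changes neither the attention scores (by symmetry of
`Qᵢ Kᵢᵀ`) nor the values (the columns of `Vᵢ` lie in the row space of `Qᵢ Kᵢᵀ`). -/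

open Module

section FinrankSup

variable {K V ι : Type*} [DivisionRing K] [AddCommGroup V] [Module K V] [FiniteDimensional K V]

lemma Submodule.finrank_finsetSup_le (s : Finset ι) (S : ι → Submodule K V) :
    finrank K ↥(s.sup S) ≤ ∑ k ∈ s, finrank K ↥(S k) := by
  classical
  induction s using Finset.induction with
  | empty => simp
  | insert a s ha ih =>
    rw [Finset.sup_insert, Finset.sum_insert ha]
    exact (Submodule.finrank_add_le_finrank_add_finrank _ _).trans (by omega)

lemma Submodule.finrank_iSup_add_finrank_inf_le [Fintype ι] (S : ι → Submodule K V) {i j : ι}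
    (hij : i ≠ j) :
    finrank K ↥(⨆ k, S k) + finrank K ↥(S i ⊓ S j) ≤ ∑ k, finrank K ↥(S k) := by
  classical
  set t := (Finset.univ.erase i).erase j
  have hsup : ⨆ k, S k = (S i ⊔ S j) ⊔ t.sup S := by
    rw [← Finset.sup_univ_eq_iSup, ← Finset.insert_erase (Finset.mem_univ i),
      ← Finset.insert_erase (Finset.mem_erase.2 ⟨hij.symm, Finset.mem_univ j⟩),
      Finset.sup_insert, Finset.sup_insert, sup_assoc]
  have hsum : ∑ k, finrank K ↥(S k) = finrank K ↥(S i) + (finrank K ↥(S j) +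
      ∑ k ∈ t, finrank K ↥(S k)) := by
    rw [← Finset.add_sum_erase _ _ (Finset.mem_univ i),
      ← Finset.add_sum_erase _ _ (Finset.mem_erase.2 ⟨hij.symm, Finset.mem_univ j⟩)]
  have hpair := Submodule.finrank_sup_add_finrank_inf_eq (S i) (S j)
  have hsplit := Submodule.finrank_add_le_finrank_add_finrank (S i ⊔ S j) (t.sup S)
  have hrest := Submodule.finrank_finsetSup_le t S
  rw [hsup, hsum]
  omega

lemma Submodule.iSup_ne_top_of_inf_ne_bot [Fintype ι] {S : ι → Submodule K V} {r : ℕ}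
    (hS : ∀ k, finrank K ↥(S k) ≤ r) (hcard : Fintype.card ι * r ≤ finrank K V) {i j : ι}
    (hij : i ≠ j) (hinf : S i ⊓ S j ≠ ⊥) : ⨆ k, S k ≠ ⊤ := by
  intro htop
  have hpos : finrank K ↥(S i ⊓ S j) ≠ 0 := Submodule.finrank_eq_zero.not.2 hinf
  have hsum : ∑ k, finrank K ↥(S k) ≤ Fintype.card ι * r := by
    simpa using Finset.sum_le_card_nsmul Finset.univ _ r fun k _ => hS k
  have hdim := Submodule.finrank_iSup_add_finrank_inf_le S hij
  rw [htop, finrank_top] at hdim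
  omega

end FinrankSup

lemma exists_ne_zero_forall_dotProduct_eq_zero {K n : Type*} [Field K] [Fintype n]
    [DecidableEq n] {p : Submodule K (n → K)} (hp : p ≠ ⊤) :
    ∃ w ≠ 0, ∀ v ∈ p, w ⬝ᵥ v = 0 := by
  obtain ⟨f, hf0, hf⟩ := Submodule.exists_dual_map_eq_bot_of_lt_top (lt_top_iff_ne_top.2 hp)
    inferInstance
  refine ⟨(dotProductEquiv K n).symm f, by simpa using hf0, fun v hv => ?_⟩
  rw [← dotProductEquiv_apply_apply, LinearEquiv.apply_symm_apply]
  exact (Submodule.mem_bot K).1 (hf ▸ Submodule.mem_map_of_mem hv)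

section RowSpace

variable {m n : ℕ}

lemma row_mem_rowSpace (A : Matrix (Fin m) (Fin n) ℝ) (k : Fin m) : A k ∈ rowSpace A :=
  ⟨Pi.single k 1, by rw [mulVecLin_apply, mulVec_single_one]; rfl⟩

lemma finrank_rowSpace (A : Matrix (Fin m) (Fin n) ℝ) : finrank ℝ ↥(rowSpace A) = A.rank := by
  rw [← rank_transpose]
  rfl

lemma mulVec_eq_zero_of_forall_mem_rowSpace {A : Matrix (Fin m) (Fin n) ℝ} {w : Fin n → ℝ}
    (hw : ∀ v ∈ rowSpace A, w ⬝ᵥ v = 0) : A *ᵥ w = 0 :=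
  funext fun k => by rw [mulVec, dotProduct_comm]; exact hw _ (row_mem_rowSpace A k)

end RowSpace

section Attention

variable {d dh N : ℕ} {Q K V : Matrix (Fin d) (Fin dh) ℝ}

lemma attnHead_add_of_mul_eq_zero {W : Matrix (Fin N) (Fin d) ℝ} (hWA : W * (Q * Kᵀ) = 0)
    (hAW : Q * Kᵀ * Wᵀ = 0) (hWV : W * V = 0) (X : Matrix (Fin N) (Fin d) ℝ) :
    attnHead Q K V (X + W) = attnHead Q K V X := by
  have hscores : (X + W) * Q * Kᵀ * (X + W)ᵀ = X * Q * Kᵀ * Xᵀ := by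
    calc (X + W) * Q * Kᵀ * (X + W)ᵀ = (X + W) * (Q * Kᵀ) * (X + W)ᵀ := by
          simp only [Matrix.mul_assoc]
      _ = X * (Q * Kᵀ) * Xᵀ := by
          rw [Matrix.add_mul, hWA, add_zero, transpose_add, Matrix.mul_add,
            Matrix.mul_assoc X _ Wᵀ, hAW, Matrix.mul_zero, add_zero]
      _ = X * Q * Kᵀ * Xᵀ := by simp only [Matrix.mul_assoc]
  rw [attnHead, attnHead, hscores, Matrix.add_mul, hWV, add_zero]

lemma attnHead_add_replicateRow (hsymm : (Q * Kᵀ)ᵀ = Q * Kᵀ)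
    (hV : rowSpace Vᵀ ≤ rowSpace (Q * Kᵀ)) {w : Fin d → ℝ}
    (hw : ∀ v ∈ rowSpace (Q * Kᵀ), w ⬝ᵥ v = 0) (X : Matrix (Fin N) (Fin d) ℝ) :
    attnHead Q K V (X + replicateRow (Fin N) w) = attnHead Q K V X := by
  have hAw : (Q * Kᵀ) *ᵥ w = 0 := mulVec_eq_zero_of_forall_mem_rowSpace hw
  have hVw : Vᵀ *ᵥ w = 0 := mulVec_eq_zero_of_forall_mem_rowSpace fun v hv => hw v (hV hv)
  apply attnHead_add_of_mul_eq_zero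
  · rw [← replicateRow_vecMul, ← hsymm, vecMul_transpose, hAw, replicateRow_zero]
  · rw [transpose_replicateRow, ← replicateCol_mulVec, hAw, replicateCol_zero]
  · rw [← replicateRow_vecMul, ← mulVec_transpose, hVw, replicateRow_zero]

end Attention

theorem nullspace_of_attention_heads_general
    {d dh h N : ℕ} (hN : 0 < N) (hhd : h * dh ≤ d)
    (Q K V : Fin h → Matrix (Fin d) (Fin dh) ℝ)
    (h1 : ∀ i, (Q i * (K i)ᵀ)ᵀ = Q i * (K i)ᵀ)
    (h2 : ∀ i, rowSpace (V i)ᵀ ≤ rowSpace (Q i * (K i)ᵀ))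
    (h3 : ∃ m m' : Fin h, m ≠ m' ∧ ∃ k : Fin d,
      (Q m * (K m)ᵀ) k ≠ 0 ∧ (Q m * (K m)ᵀ) k ∈ rowSpace (Q m' * (K m')ᵀ)) :
    ∃ W : Matrix (Fin N) (Fin d) ℝ, W ≠ 0 ∧
      ∀ (i : Fin h) (X : Matrix (Fin N) (Fin d) ℝ),
        attnHead (Q i) (K i) (V i) (X + W) = attnHead (Q i) (K i) (V i) X := by
  obtain ⟨m, m', hmm', k, hk0, hk⟩ := h3
  set S : Fin h → Submodule ℝ (Fin d → ℝ) := fun i => rowSpace (Q i * (K i)ᵀ)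
  have hS : ∀ i, finrank ℝ ↥(S i) ≤ dh := fun i =>
    (finrank_rowSpace _).trans_le ((rank_mul_le_left _ _).trans (rank_le_width _))
  have hinf : S m ⊓ S m' ≠ ⊥ :=
    (Submodule.ne_bot_iff _).2 ⟨_, ⟨row_mem_rowSpace _ k, hk⟩, hk0⟩
  have hsup : ⨆ i, S i ≠ ⊤ :=
    Submodule.iSup_ne_top_of_inf_ne_bot hS (by simpa using hhd) hmm' hinf
  obtain ⟨w, hw0, hw⟩ := exists_ne_zero_forall_dotProduct_eq_zero hsup
  have : Nonempty (Fin N) := Fin.pos_iff_nonempty.1 hN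
  exact ⟨replicateRow (Fin N) w, by simpa using hw0, fun i =>
    attnHead_add_replicateRow (h1 i) (h2 i) fun v hv => hw v (le_iSup S i hv)⟩

theorem nullspace_of_attention_heads
    {d dh h N : ℕ} (hd : 0 < d) (hdh : 0 < dh) (hN : 0 < N)
    (hh : 2 ≤ h) (hhd : h * dh ≤ d)
    (Q K V : Fin h → Matrix (Fin d) (Fin dh) ℝ)
    (h1 : ∀ i, (Q i * (K i)ᵀ)ᵀ = Q i * (K i)ᵀ)
    (h2 : ∀ i, rowSpace (V i)ᵀ ≤ rowSpace (Q i * (K i)ᵀ))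
    (h3 : ∃ m m' : Fin h, m ≠ m' ∧ ∃ k : Fin d,
      (Q m * (K m)ᵀ) k ≠ 0 ∧ (Q m * (K m)ᵀ) k ∈ rowSpace (Q m' * (K m')ᵀ)) :
    ∃ W : Matrix (Fin N) (Fin d) ℝ, W ≠ 0 ∧
      ∀ (i : Fin h) (X : Matrix (Fin N) (Fin d) ℝ),
        attnHead (Q i) (K i) (V i) (X + W) = attnHead (Q i) (K i) (V i) X :=
  nullspace_of_attention_heads_general hN hhd Q K V h1 h2 h3
end

section
/- Let Q, K, V ∈ ℝ^{d×dh}, set A = Q Kᵀ, and assume A is symmetric. Let W ∈ ℝ^{N×d} satisfy W · A = 0 and W · V = 0. Then for every X ∈ ℝ^{N×d}, the attention head head(X) = rowSoftmax(X Q Kᵀ Xᵀ) · (X V) satisfies head(X + W) = head(X). -/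
open Matrix

theorem head_invariant_of_ker_noise {d dh N : ℕ}
    (Q K V : Matrix (Fin d) (Fin dh) ℝ)
    (hA : (Q * Kᵀ)ᵀ = Q * Kᵀ)
    (W : Matrix (Fin N) (Fin d) ℝ)
    (hWA : W * (Q * Kᵀ) = 0) (hWV : W * V = 0) :
    ∀ X : Matrix (Fin N) (Fin d) ℝ,
      attnHead Q K V (X + W) = attnHead Q K V X := by
  intro X
  have hAW : (Q * Kᵀ) * Wᵀ = 0 := by
    calc (Q * Kᵀ) * Wᵀ = (W * (Q * Kᵀ)ᵀ)ᵀ := by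
          rw [Matrix.transpose_mul, Matrix.transpose_transpose]
      _ = 0 := by rw [hA, hWA, Matrix.transpose_zero]
  have hS : (X + W) * Q * Kᵀ * (X + W)ᵀ = X * Q * Kᵀ * Xᵀ := by
    have h1 : (X + W) * Q * Kᵀ = X * Q * Kᵀ := by
      rw [Matrix.add_mul, Matrix.add_mul]
      have : W * Q * Kᵀ = 0 := by rw [Matrix.mul_assoc]; exact hWA
      rw [this, add_zero]
    rw [h1, Matrix.transpose_add, Matrix.mul_add]
    have : X * Q * Kᵀ * Wᵀ = 0 := by
      rw [Matrix.mul_assoc X Q Kᵀ, Matrix.mul_assoc, hAW, Matrix.mul_zero]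
    rw [this, add_zero]
  have hV : (X + W) * V = X * V := by rw [Matrix.add_mul, hWV, add_zero]
  unfold attnHead
  rw [hS, hV]
end
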